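/- The bilinear form b of the first-order mixed formulation satisfies the inf-sup condition: inf over (λ,μ) ∈ X of sup over (y,p) ∈ U of b((y,p),(λ,μ))/(‖(y,p)‖_U ‖(λ,μ)‖_X) is at least δ := (max{C_{Ω,T}ρ⋆⁻²‖ρ₁‖²_{L^∞(Q_T)} + η₁, C_{Ω,T}ρ⋆⁻²‖ρ‖²_{L^∞(Q_T)} + η₂})^{−1/2}. -/

import Mathlib

/-!
With `Im u = ρ⁻¹ I(y,p)`, `Jm u = ρ₁⁻¹ J(y,p)` and `obsU u = ρ₀⁻¹ y|_{q_T}`, the form is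
`b(u, (λ, μ)) = ⟪Jm u, μ⟫ + ⟪Im u, λ⟫`. For fixed `(λ, μ)` it is a continuous linear functional
of `u`, so the quotient is bounded above and the supremum is a genuine one. The bound is attained
by the solution `u` of the first-order system with sources `(λ, μ)`: then
`b(u, (λ, μ)) = ‖(λ, μ)‖²_X`, while the norm identity of `U` and the energy estimate give
`‖u‖²_U ≤ δ⁻² ‖(λ, μ)‖²_X`.
-/

open scoped RealInnerProductSpace
open Set

theorem bddAbove_range_div_norm_mul {E : Type*} [SeminormedAddCommGroup E] [NormedSpace ℝ E]
    (f : E →L[ℝ] ℝ) (c : ℝ) : BddAbove (range fun u => f u / (‖u‖ * c)) := by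
  refine ⟨‖f‖ / |c|, ?_⟩
  rintro _ ⟨u, rfl⟩
  calc f u / (‖u‖ * c) ≤ |f u| / (‖u‖ * |c|) := by
        rw [← abs_norm u, ← abs_mul, ← abs_div, abs_norm]; exact le_abs_self _
    _ ≤ ‖f‖ * ‖u‖ / (‖u‖ * |c|) := by gcongr; exact f.le_opNorm u
    _ ≤ ‖f‖ / |c| := by
        rcases (norm_nonneg u).eq_or_lt with hu | hu
        · rw [← hu]; simp only [mul_zero, zero_mul, div_zero]; positivity
        · rw [mul_comm ‖f‖, mul_div_mul_left _ _ hu.ne']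

theorem inv_sqrt_le_div_mul_sqrt {a M S : ℝ} (ha : 0 < a) (hS : 0 < S) (h : a ^ 2 ≤ M * S) :
    (√M)⁻¹ ≤ S / (a * √S) := by
  have hM : 0 < M := pos_of_mul_pos_left ((pow_pos ha 2).trans_le h) hS.le
  have haM : a ≤ √M * √S := by
    rw [← Real.sqrt_mul hM.le]; exact Real.le_sqrt_of_sq_le h
  have hsS : 0 < √S := Real.sqrt_pos.mpr hS
  calc (√M)⁻¹ = √S / (√M * √S) := by
        rw [div_mul_cancel_right₀ hsS.ne']
    _ ≤ √S / a := by gcongr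
    _ = S / (a * √S) := by
        rw [div_eq_div_iff ha.ne' (by positivity), mul_left_comm, Real.mul_self_sqrt hS.le,
          mul_comm]

theorem firstOrder_infSup_property
    {U HQ VQ Hq : Type*}
    [NormedAddCommGroup U] [InnerProductSpace ℝ U]
    [NormedAddCommGroup HQ] [InnerProductSpace ℝ HQ]
    [NormedAddCommGroup VQ] [InnerProductSpace ℝ VQ]
    [NormedAddCommGroup Hq] [InnerProductSpace ℝ Hq]
    (obsU : U →L[ℝ] Hq) (Jm : U →L[ℝ] VQ) (Im : U →L[ℝ] HQ)
    (η₁ η₂ : ℝ)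
    (ρstar Mρ Mρ₁ CΩT : ℝ)
    (hnormU : ∀ u : U,
      ‖u‖ ^ 2 = ‖obsU u‖ ^ 2 + η₁ * ‖Jm u‖ ^ 2 + η₂ * ‖Im u‖ ^ 2)
    (hsolveU : ∀ (lam : HQ) (mu : VQ), ∃ u : U, Im u = lam ∧ Jm u = mu ∧
      ‖obsU u‖ ^ 2 ≤
        CΩT * ρstar⁻¹ ^ 2 * (Mρ ^ 2 * ‖lam‖ ^ 2 + Mρ₁ ^ 2 * ‖mu‖ ^ 2)) :
    ∀ (lam : HQ) (mu : VQ), ¬(lam = 0 ∧ mu = 0) →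
      (Real.sqrt (max (CΩT * ρstar⁻¹ ^ 2 * Mρ₁ ^ 2 + η₁)
          (CΩT * ρstar⁻¹ ^ 2 * Mρ ^ 2 + η₂)))⁻¹ ≤
        ⨆ u : U, (⟪Jm u, mu⟫ + ⟪Im u, lam⟫) /
          (‖u‖ * Real.sqrt (‖lam‖ ^ 2 + ‖mu‖ ^ 2)) := by
  intro lam mu hne
  obtain ⟨u, hIm, hJm, hobs⟩ := hsolveU lam mu
  have hS : 0 < ‖lam‖ ^ 2 + ‖mu‖ ^ 2 := by
    rcases not_and_or.mp hne with h | h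
    · exact add_pos_of_pos_of_nonneg (pow_pos (norm_pos_iff.mpr h) 2) (sq_nonneg _)
    · exact add_pos_of_nonneg_of_pos (sq_nonneg _) (pow_pos (norm_pos_iff.mpr h) 2)
  have hu : 0 < ‖u‖ := by
    refine norm_pos_iff.mpr fun hu => hne ⟨?_, ?_⟩
    · rw [← hIm, hu, map_zero]
    · rw [← hJm, hu, map_zero]
  have hb : ⟪Jm u, mu⟫ + ⟪Im u, lam⟫ = ‖lam‖ ^ 2 + ‖mu‖ ^ 2 := by
    rw [hIm, hJm, real_inner_self_eq_norm_sq, real_inner_self_eq_norm_sq, add_comm]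
  set M := max (CΩT * ρstar⁻¹ ^ 2 * Mρ₁ ^ 2 + η₁) (CΩT * ρstar⁻¹ ^ 2 * Mρ ^ 2 + η₂)
  have hnorm : ‖u‖ ^ 2 ≤ M * (‖lam‖ ^ 2 + ‖mu‖ ^ 2) := by
    rw [hnormU, hIm, hJm]
    linarith [mul_le_mul_of_nonneg_right (le_max_left _ _ : _ ≤ M) (sq_nonneg ‖mu‖),
      mul_le_mul_of_nonneg_right (le_max_right _ _ : _ ≤ M) (sq_nonneg ‖lam‖)]
  have hbdd := bddAbove_range_div_norm_mul
    ((innerSLFlip ℝ mu).comp Jm + (innerSLFlip ℝ lam).comp Im) √(‖lam‖ ^ 2 + ‖mu‖ ^ 2)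
  refine le_ciSup_of_le hbdd u ?_
  rw [hb]
  exact inv_sqrt_le_div_mul_sqrt hu hS hnorm
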